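/- arXiv:2006.06371 — 2 statements merged into one kernel-verified Lean document; each statement's English description precedes it below -/
import Mathlib

section
/- Let G be a metabelian group given by a full-rank presentation G = ⟨A ∣ R⟩_M with |R| ≥ |A|. Then G is virtually abelian. -/
/-- Exponent sum of the generator `j` in an element of the free group. -/
def expSum {n : ℕ} (j : Fin n) (w : FreeGroup (Fin n)) : ℤ :=
  Multiplicative.toAdd
    ((FreeGroup.lift fun i => Multiplicative.ofAdd (if i = j then (1 : ℤ) else 0)) w)

/-- The relation matrix `M(A,R)` of a presentation with `n` generators and `m` relators:
its `(i,j)` entry is the exponent sum of `a_j` in `r_i`. -/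
def relMatrix {n m : ℕ} (R : Fin m → FreeGroup (Fin n)) : Matrix (Fin m) (Fin n) ℤ :=
  fun i j => expSum j (R i)

instance derivedSeriesNormal {G : Type*} [Group G] (k : ℕ) : (derivedSeries G k).Normal :=
  derivedSeries_normal G k

/-- The normal subgroup `N · F''` of the free group determined by the relators `R`,
where `N` is the normal closure of `R` and `F''` is the second derived subgroup. -/
def metabelianRel {n : ℕ} (R : Set (FreeGroup (Fin n))) : Subgroup (FreeGroup (Fin n)) :=
  Subgroup.normalClosure (R ∪ (derivedSeries (FreeGroup (Fin n)) 2 : Subgroup (FreeGroup (Fin n))))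

instance {n : ℕ} (R : Set (FreeGroup (Fin n))) : (metabelianRel R).Normal :=
  Subgroup.normalClosure_normal

/-- The metabelian group presented by `⟨A ∣ R⟩_M`, i.e. `F(A)/(N·F(A)'')`. -/
abbrev MetabelianPresented {n : ℕ} (R : Set (FreeGroup (Fin n))) : Type :=
  FreeGroup (Fin n) ⧸ metabelianRel R

/-- The free metabelian group of rank `k`: the quotient of the free group of rank `k`
by its second derived subgroup. -/
abbrev FreeMetabelian (k : ℕ) : Type :=
  FreeGroup (Fin k) ⧸ derivedSeries (FreeGroup (Fin k)) 2

/-- A group is virtually abelian if it has an abelian subgroup of finite index. -/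
def VirtuallyAbelian (G : Type*) [Group G] : Prop :=
  ∃ H : Subgroup G, (∀ x ∈ H, ∀ y ∈ H, x * y = y * x) ∧ H.FiniteIndex

/-!
Since `G'' = 1`, the commutator subgroup `G'` is abelian, and it has finite index as soon as
the abelianization `G/G'` is finite. The abelianization is a quotient of `ℤⁿ` by the row lattice
of the relation matrix `M`, and that lattice has finite index when `rank M = n`: `M` is then
injective on `ℤⁿ`, so `det (Mᵀ M) ≠ 0`, and the adjugate identity puts `det (Mᵀ M) • ℤⁿ` inside
the row lattice.
-/

open Matrix

namespace Matrix

variable {m n R : Type*} [Fintype n]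

theorem ker_mulVecLin_eq_bot_of_rank_eq_card_width [CommRing R] [IsDomain R] (A : Matrix m n R)
    (h : A.rank = Fintype.card n) : LinearMap.ker A.mulVecLin = ⊥ := by
  have hsum := rank_quotient_add_rank_of_isDomain (LinearMap.ker A.mulVecLin)
  rw [← Module.finrank_eq_rank, A.mulVecLin.quotKerEquivRange.finrank_eq, ← rank, h,
    rank_fun'] at hsum
  exact Submodule.rank_eq_zero.mp <|
    Cardinal.eq_of_add_eq_add_left (hsum.trans (add_zero _).symm) Cardinal.natCast_lt_aleph0

theorem exists_smul_mem_range_mulVecLin_transpose [Fintype m] [CommRing R] [LinearOrder R]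
    [IsStrictOrderedRing R] [DecidableEq n] (A : Matrix m n R)
    (hA : LinearMap.ker A.mulVecLin = ⊥) :
    ∃ d : R, d ≠ 0 ∧ ∀ y, d • y ∈ LinearMap.range Aᵀ.mulVecLin := by
  refine ⟨(Aᵀ * A).det, ?_, fun y => ⟨A *ᵥ (Aᵀ * A).adjugate *ᵥ y, ?_⟩⟩
  · rw [Ne, ← exists_mulVec_eq_zero_iff]
    rintro ⟨v, hv, hAv⟩
    have hnorm := congr_arg (v ⬝ᵥ ·) hAv
    rw [← mulVec_mulVec, dotProduct_mulVec, vecMul_transpose, dotProduct_zero,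
      dotProduct_self_eq_zero] at hnorm
    exact hv (ker_mulVecLin_eq_bot_iff.mp hA v hnorm)
  · rw [mulVecLin_apply, mulVec_mulVec, mulVec_mulVec, mul_adjugate, smul_mulVec, one_mulVec]

theorem finite_quotient_range_mulVecLin_transpose [Fintype m] (A : Matrix m n ℤ)
    (h : A.rank = Fintype.card n) : Finite ((n → ℤ) ⧸ LinearMap.range Aᵀ.mulVecLin) := by
  classical
  obtain ⟨d, hd, hdy⟩ := A.exists_smul_mem_range_mulVecLin_transpose
    (A.ker_mulVecLin_eq_bot_of_rank_eq_card_width h)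
  refine Module.finite_of_fg_torsion _ fun x => ?_
  obtain ⟨y, rfl⟩ := Submodule.Quotient.mk_surjective _ x
  exact ⟨⟨d, mem_nonZeroDivisors_of_ne_zero hd⟩,
    (Submodule.Quotient.mk_smul _ d y).symm.trans
      ((Submodule.Quotient.mk_eq_zero _).mpr (hdy y))⟩

end Matrix

theorem expSum_mul {n : ℕ} (j : Fin n) (x y : FreeGroup (Fin n)) :
    expSum j (x * y) = expSum j x + expSum j y := by
  simp [expSum]

theorem map_eq_prod_zpow_expSum {n : ℕ} {C : Type*} [CommGroup C] (φ : FreeGroup (Fin n) →* C)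
    (w : FreeGroup (Fin n)) : φ w = ∏ j, φ (FreeGroup.of j) ^ expSum j w := by
  induction w using FreeGroup.induction_on with
  | C1 => simp [expSum]
  | of i => simp [expSum]
  | inv_of i h => simp [expSum]
  | mul x y hx hy => simp [expSum_mul, _root_.zpow_add, Finset.prod_mul_distrib, hx, hy]

theorem finite_of_surjective_of_map_relators_eq_one {n m : ℕ} {C : Type*} [CommGroup C]
    {R : Fin m → FreeGroup (Fin n)} (hrank : (relMatrix R).rank = n)
    {φ : FreeGroup (Fin n) →* C} (hφ : Function.Surjective φ) (hR : ∀ i, φ (R i) = 1) :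
    Finite C := by
  let f : (Fin n → ℤ) →ₗ[ℤ] Additive C :=
    Fintype.linearCombination ℤ fun j => Additive.ofMul (φ (.of j))
  have hf : ∀ w, f (fun j => expSum j w) = Additive.ofMul (φ w) := fun w => by
    simp [f, Fintype.linearCombination_apply, map_eq_prod_zpow_expSum φ w, ofMul_prod, ofMul_zpow]
  have hrows : LinearMap.range (relMatrix R)ᵀ.mulVecLin ≤ LinearMap.ker f := by
    rw [Matrix.range_mulVecLin, Matrix.col_transpose, Submodule.span_le]
    rintro _ ⟨i, rfl⟩
    exact (hf (R i)).trans (by rw [hR]; rfl)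
  have := (relMatrix R).finite_quotient_range_mulVecLin_transpose (by rwa [Fintype.card_fin])
  refine Finite.of_surjective (fun q => Additive.toMul (Submodule.liftQ _ f hrows q)) fun c => ?_
  obtain ⟨w, rfl⟩ := hφ c
  exact ⟨Submodule.Quotient.mk fun j => expSum j w, congr_arg Additive.toMul (hf w)⟩

theorem finite_abelianization_metabelianPresented {n m : ℕ} {R : Fin m → FreeGroup (Fin n)}
    (hrank : (relMatrix R).rank = n) :
    Finite (Abelianization (MetabelianPresented (Set.range R))) :=
  finite_of_surjective_of_map_relators_eq_one hrank
    (φ := Abelianization.of.comp (QuotientGroup.mk' _))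
    (QuotientGroup.mk_surjective.comp (QuotientGroup.mk'_surjective _)) fun i => by
      have hRi : QuotientGroup.mk' (metabelianRel (Set.range R)) (R i) = 1 :=
        (QuotientGroup.eq_one_iff _).mpr (Subgroup.subset_normalClosure (.inl ⟨i, rfl⟩))
      rw [MonoidHom.comp_apply, hRi, map_one]

theorem derivedSeries_metabelianPresented_two_eq_bot {n : ℕ} (R : Set (FreeGroup (Fin n))) :
    derivedSeries (MetabelianPresented R) 2 = ⊥ := by
  rw [← map_derivedSeries_eq (QuotientGroup.mk'_surjective (metabelianRel R)),
    Subgroup.map_eq_bot_iff, QuotientGroup.ker_mk']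
  exact fun x hx => Subgroup.subset_normalClosure (.inr hx)

theorem virtuallyAbelian_of_derivedSeries_two_eq_bot {G : Type*} [Group G]
    [Finite (Abelianization G)] (h : derivedSeries G 2 = ⊥) : VirtuallyAbelian G := by
  have : Finite (G ⧸ commutator G) := ‹Finite (Abelianization G)›
  refine ⟨commutator G, fun x hx y hy => ?_, Subgroup.finiteIndex_of_finite_quotient⟩
  rw [← derivedSeries_one] at hx hy
  rw [← commutatorElement_eq_one_iff_mul_comm, ← Subgroup.mem_bot, ← h]
  exact Subgroup.commutator_mem_commutator hx hy

/-- A metabelian group given by a full-rank presentation with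
`|R| ≥ |A|` is virtually abelian. -/
theorem full_rank_virtually_abelian {n m : ℕ} (R : Fin m → FreeGroup (Fin n))
    (hfull : (relMatrix R).rank = min m n) (hm : n ≤ m) :
    VirtuallyAbelian (MetabelianPresented (Set.range R)) := by
  have := finite_abelianization_metabelianPresented (hfull.trans (min_eq_right hm))
  exact virtuallyAbelian_of_derivedSeries_two_eq_bot
    (derivedSeries_metabelianPresented_two_eq_bot _)
end

section
/- Let m ≤ n and let G = ⟨a_1,…,a_n ∣ a_1^{α_1} = c_1, …, a_m^{α_m} = c_m⟩_M be a metabelian presented group, where each c_i lies in the derived subgroup [F(A),F(A)] of the free group F(A) and each α_i is a nonzero integer. Set K = ⟨a_1,…,a_m⟩ ≤ G and N = α_1⋯α_m. Then K ∩ [G,G] is abelian, g^N ∈ K ∩ [G,G] for every g ∈ K, and the quotient K/(K ∩ [G,G]) is finite. -/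
/-! Modulo `[G,G]` each generator `a_i` of `K` has order dividing `α_i`, since
`a_i^{α_i} = c_i ∈ [G,G]`. So the image of `K` in the abelianization of `G` is a finitely
generated abelian group of exponent dividing `N`, hence finite, and the kernel of `K` onto this image
is `K ∩ [G,G]`. That `K ∩ [G,G]` is abelian only uses `G'' = 1`. -/

open Subgroup

section

variable {G : Type*} [Group G]

theorem mul_comm_of_mem_commutator_of_derivedSeries_two_eq_bot (h : derivedSeries G 2 = ⊥)
    {x y : G} (hx : x ∈ commutator G) (hy : y ∈ commutator G) : x * y = y * x := by
  rw [derivedSeries_succ, derivedSeries_one, commutator_eq_bot_iff_le_centralizer] at h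
  exact mem_centralizer_iff.mp (h hy) x hx

theorem map_mem_commutator {H : Type*} [Group H] (f : G →* H) {x : G}
    (hx : x ∈ commutator G) : f x ∈ commutator H := by
  have hmap : (commutator G).map f ≤ commutator H := by
    rw [map_commutator_eq]
    exact commutator_mono le_top le_top
  exact hmap (mem_map_of_mem f hx)

theorem zpow_mem_commutator_of_mem_closure {ι : Type*} {x : ι → G} {e : ι → ℤ}
    (hx : ∀ i, x i ^ e i ∈ commutator G) {N : ℤ} (hN : ∀ i, e i ∣ N) {g : G}
    (hg : g ∈ closure (Set.range x)) : g ^ N ∈ commutator G := by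
  suffices closure (Set.range x) ≤ ((zpowGroupHom N).ker.comap Abelianization.of) by
    simpa [← Abelianization.ker_of] using this hg
  rw [closure_le]
  rintro _ ⟨i, rfl⟩
  obtain ⟨k, rfl⟩ := hN i
  have hxi : Abelianization.of (x i ^ e i) = 1 := by
    rw [← MonoidHom.mem_ker, Abelianization.ker_of]
    exact hx i
  simp [zpow_mul, ← map_zpow, hxi]

theorem finiteIndex_commutator_subgroupOf {K : Subgroup G} [Group.FG K] {N : ℤ} (hN : N ≠ 0)
    (h : ∀ g ∈ K, g ^ N ∈ commutator G) : ((commutator G).subgroupOf K).FiniteIndex := by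
  set f := (Abelianization.of : G →* Abelianization G).comp K.subtype
  have hker : f.ker = (commutator G).subgroupOf K := by
    rw [← MonoidHom.comap_ker, Abelianization.ker_of, subgroupOf]
  have htorsion : IsMulTorsion f.range := by
    rintro ⟨_, g, rfl⟩
    refine isOfFinOrder_iff_pow_eq_one.mpr ⟨N.natAbs, Int.natAbs_pos.mpr hN, ?_⟩
    have hg : f g ^ N = 1 := by
      rw [← map_zpow, ← MonoidHom.mem_ker, hker, mem_subgroupOf]
      exact h g g.2
    ext
    simpa using pow_natAbs_eq_one.mpr hg
  have : Finite f.range := CommGroup.finite_of_fg_isMulTorsion _ htorsion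
  rw [← hker]
  infer_instance

end

namespace MetabelianPresented

variable {n : ℕ} {R : Set (FreeGroup (Fin n))}

theorem derivedSeries_two_eq_bot : derivedSeries (MetabelianPresented R) 2 = ⊥ := by
  rw [← map_derivedSeries_eq (QuotientGroup.mk'_surjective (metabelianRel R)),
    Subgroup.map_eq_bot_iff, QuotientGroup.ker_mk']
  exact fun x hx => subset_normalClosure (Set.mem_union_right _ hx)

theorem mk_mem_commutator_of_mul_inv_mem {w c : FreeGroup (Fin n)} (hR : w * c⁻¹ ∈ R)
    (hc : c ∈ commutator (FreeGroup (Fin n))) :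
    (w : MetabelianPresented R) ∈ commutator (MetabelianPresented R) := by
  have hrel : ((w * c⁻¹ : FreeGroup (Fin n)) : MetabelianPresented R) = 1 :=
    (QuotientGroup.eq_one_iff _).mpr (subset_normalClosure (Set.mem_union_left _ hR))
  rw [QuotientGroup.mk_mul, QuotientGroup.mk_inv, mul_inv_eq_one] at hrel
  rw [hrel]
  exact map_mem_commutator (QuotientGroup.mk' _) hc

end MetabelianPresented

/-- In the metabelian group presented in Smith normal form
`⟨a_1,…,a_n ∣ a_1^{α_1} = c_1, …, a_m^{α_m} = c_m⟩_M` with `c_i ∈ [F,F]` and `α_i ≠ 0`,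
the subgroup `K = ⟨a_1,…,a_m⟩` satisfies: `K ∩ [G,G]` is abelian, `g^N ∈ K ∩ [G,G]` for all
`g ∈ K` where `N = α_1 ⋯ α_m`, and the quotient `K/(K ∩ [G,G])` is finite. -/
theorem smith_normal_form_K_virtually_abelian {n m : ℕ} (hmn : m ≤ n)
    (α : Fin m → ℤ) (hα : ∀ i, α i ≠ 0)
    (c : Fin m → FreeGroup (Fin n)) (hc : ∀ i, c i ∈ commutator (FreeGroup (Fin n)))
    (R : Fin m → FreeGroup (Fin n))
    (hR : ∀ i, R i = FreeGroup.of (Fin.castLE hmn i) ^ α i * (c i)⁻¹)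
    (π : FreeGroup (Fin n) →* MetabelianPresented (Set.range R))
    (hπ : π = QuotientGroup.mk' (metabelianRel (Set.range R)))
    (K : Subgroup (MetabelianPresented (Set.range R)))
    (hK : K = Subgroup.closure (Set.range fun i : Fin m => π (FreeGroup.of (Fin.castLE hmn i))))
    (N : ℤ) (hN : N = ∏ i, α i) :
    (∀ x ∈ K ⊓ commutator (MetabelianPresented (Set.range R)),
      ∀ y ∈ K ⊓ commutator (MetabelianPresented (Set.range R)), x * y = y * x) ∧
    (∀ g ∈ K, g ^ N ∈ K ⊓ commutator (MetabelianPresented (Set.range R))) ∧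
    ((commutator (MetabelianPresented (Set.range R))).subgroupOf K).FiniteIndex := by
  have hgen : ∀ i, π (FreeGroup.of (Fin.castLE hmn i)) ^ α i ∈ commutator _ := fun i => by
    rw [hπ, ← map_zpow]
    exact MetabelianPresented.mk_mem_commutator_of_mul_inv_mem ⟨i, hR i⟩ (hc i)
  have hpow : ∀ g ∈ K, g ^ N ∈ commutator _ := fun g hg =>
    zpow_mem_commutator_of_mem_closure hgen
      (fun i => hN ▸ Finset.dvd_prod_of_mem α (Finset.mem_univ i)) (hK ▸ hg)
  have hN0 : N ≠ 0 := hN ▸ Finset.prod_ne_zero_iff.mpr fun i _ => hα i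
  have : Group.FG K := by
    subst hK
    infer_instance
  refine ⟨fun x hx y hy => ?_, fun g hg => ⟨zpow_mem hg N, hpow g hg⟩,
    finiteIndex_commutator_subgroupOf hN0 hpow⟩
  exact mul_comm_of_mem_commutator_of_derivedSeries_two_eq_bot
    MetabelianPresented.derivedSeries_two_eq_bot hx.2 hy.2
end
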